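/- arXiv:1109.2359 — 3 statements merged into one kernel-verified Lean document; each statement's English description precedes it below -/
import Mathlib

section
/- Take n = 2, σ = (1,2,2) and σ' = (2,1,2), so that σσ' = (2,2,4) and σ, σ' are not coprime. Then the canonical map f : P(2,2,4) → {(z', z) ∈ P(2,1,2) × P(1,2,2) : e(1/σ')(z') = e(1/σ)(z) in ℂP²} given by f(w) = (e(σ'/σσ')(w), e(σ/σσ')(w)) is not injective. Hence the coprimality hypothesis in the statement that the square of e-maps is a pullback cannot be omitted. -/
noncomputable section

/-- The unit sphere in `ℂ^m` (the sphere `S^{2m-1}`). -/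
abbrev Sph (m : ℕ) : Type := {z : Fin m → ℂ // ∑ i, ‖z i‖ ^ 2 = 1}

/-- The relation on the sphere whose quotient is the weighted projective space `P(χ)`:
`z ∼ w` iff `w = t ·_χ z` for some unimodular `t`. -/
def wRel (m : ℕ) (χ : Fin m → ℕ) (z w : Sph m) : Prop :=
  ∃ t : ℂ, ‖t‖ = 1 ∧ ∀ i, (w : Fin m → ℂ) i = t ^ χ i * (z : Fin m → ℂ) i

/-- The weighted projective space `P(χ)`, with the quotient topology. -/
abbrev WP (m : ℕ) (χ : Fin m → ℕ) : Type := Quot (wRel m χ)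

/-- The class `[z]_χ` of a point of the sphere in `P(χ)`. -/
def wpMk (m : ℕ) (χ : Fin m → ℕ) (z : Sph m) : WP m χ := Quot.mk _ z

/-- `s(χ,ω)`: the least positive integer `s` with `ω i ∣ s * χ i` for all `i`. -/
def sVal (m : ℕ) (χ ω : Fin m → ℕ) : ℕ := sInf {s : ℕ | 0 < s ∧ ∀ i, ω i ∣ s * χ i}

/-- The exponents `d i = s(χ,ω)·χ i/ω i` of the map `e(χ/ω)`. -/
def dExp (m : ℕ) (χ ω : Fin m → ℕ) (i : Fin m) : ℕ := sVal m χ ω * χ i / ω i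

/-- `IsNorm m χ v w` says that `w` is the normalisation `N_χ(v)`, i.e. `w` lies on the
sphere and has the form `(λ^{χ_0} v_0, …)` for some real `λ > 0`. -/
def IsNorm (m : ℕ) (χ : Fin m → ℕ) (v : Fin m → ℂ) (w : Sph m) : Prop :=
  ∃ l : ℝ, 0 < l ∧ ∀ i, (w : Fin m → ℂ) i = (l : ℂ) ^ χ i * v i

/-- Coordinatewise powers of a point of the sphere. -/
def powVec (m : ℕ) (d : Fin m → ℕ) (z : Sph m) : Fin m → ℂ :=
  fun i => (z : Fin m → ℂ) i ^ d i

/-- `IsEMap m χ ω e` says that `e` is the canonical map `e(χ/ω) : P(ω) → P(χ)`: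
it is continuous and sends `[z]_ω` to `[N_χ(z_0^{d_0}, …, z_n^{d_n})]_χ`. -/
def IsEMap (m : ℕ) (χ ω : Fin m → ℕ) (e : WP m ω → WP m χ) : Prop :=
  Continuous e ∧ ∀ z w : Sph m,
    IsNorm m χ (powVec m (dExp m χ ω) z) w → e (wpMk m ω z) = wpMk m χ w


/-! The points `z = [a, a, 0]` and `z' = [-a, a, 0]` of `P(2,2,4)` are distinct, because a
unimodular `t` with `t² a = a` cannot also satisfy `t² a = -a`. But `e(σ'/σσ')` has exponents
`(2,1,1)`, which erase the sign, and `e(σ/σσ')` has exponents `(1,2,1)`, which turn it into the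
action of `t = -1` for the weights `(1,2,2)`; so both coordinates of the map agree on `z` and `z'`.
-/

section WeightedProjective

variable {m : ℕ} {χ ω : Fin m → ℕ}

lemma wRel_equivalence (m : ℕ) (χ : Fin m → ℕ) : Equivalence (wRel m χ) where
  refl _ := ⟨1, norm_one, fun _ => by rw [one_pow, one_mul]⟩
  symm := by
    rintro z w ⟨t, ht, h⟩
    have ht0 : t ≠ 0 := norm_ne_zero_iff.mp (ht ▸ one_ne_zero)
    exact ⟨t⁻¹, by rw [norm_inv, ht, inv_one], fun i => by
      rw [h i, inv_pow, inv_mul_cancel_left₀ (pow_ne_zero _ ht0)]⟩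
  trans := by
    rintro _ _ _ ⟨t, ht, h⟩ ⟨t', ht', h'⟩
    exact ⟨t' * t, by rw [norm_mul, ht, ht', one_mul],
      fun i => by rw [h' i, h i, mul_pow, mul_assoc]⟩

lemma wRel_of_wpMk_eq {z w : Sph m} (h : wpMk m χ z = wpMk m χ w) : wRel m χ z w :=
  (wRel_equivalence m χ).eqvGen_iff.mp (Quot.eqvGen_exact h)

/-- The action `t ·_χ z` of a unimodular `t` on the sphere. -/
def wSmul (χ : Fin m → ℕ) (t : ℂ) (ht : ‖t‖ = 1) (z : Sph m) : Sph m :=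
  ⟨fun i => t ^ χ i * (z : Fin m → ℂ) i, by simpa [norm_mul, norm_pow, ht] using z.2⟩

lemma wRel_wSmul (t : ℂ) (ht : ‖t‖ = 1) (z : Sph m) : wRel m χ z (wSmul χ t ht z) :=
  ⟨t, ht, fun _ => rfl⟩

lemma isNorm_wSmul {v : Fin m → ℂ} {w : Sph m} (h : IsNorm m χ v w) (t : ℂ) (ht : ‖t‖ = 1) :
    IsNorm m χ (fun i => t ^ χ i * v i) (wSmul χ t ht w) := by
  obtain ⟨l, hl, hw⟩ := h
  exact ⟨l, hl, fun i => by simp only [wSmul, hw i]; ring⟩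

/-- By the intermediate value theorem: `λ ↦ ∑ ‖λ^{χ_i} v_i‖²` is continuous on `[0, ∞)`,
vanishes at `0` and is unbounded. -/
theorem exists_isNorm (hχ : ∀ i, 0 < χ i) {v : Fin m → ℂ} (hv : v ≠ 0) : ∃ w, IsNorm m χ v w := by
  let f : ℝ → ℝ := fun l => ∑ i, ‖(l : ℂ) ^ χ i * v i‖ ^ 2
  obtain ⟨j, hj⟩ := Function.ne_iff.mp hv
  have hvj : 0 < ‖v j‖ := norm_pos_iff.mpr hj
  set L := max 1 ‖v j‖⁻¹
  have hL : 1 ≤ L := le_max_left _ _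
  have hf0 : f 0 = 0 := by simp [f, zero_pow (hχ _).ne']
  have hfL : 1 ≤ f L := by
    have hterm : 1 ≤ ‖(L : ℂ) ^ χ j * v j‖ := by
      rw [norm_mul, norm_pow, Complex.norm_real, Real.norm_of_nonneg (by positivity)]
      calc 1 = ‖v j‖⁻¹ * ‖v j‖ := (inv_mul_cancel₀ hvj.ne').symm
        _ ≤ L ^ χ j * ‖v j‖ := by
          gcongr
          exact (le_max_right _ _).trans (le_self_pow₀ hL (hχ j).ne')
    calc 1 ≤ ‖(L : ℂ) ^ χ j * v j‖ ^ 2 := one_le_pow₀ hterm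
      _ ≤ f L := Finset.single_le_sum (f := fun i => ‖(L : ℂ) ^ χ i * v i‖ ^ 2)
          (fun _ _ => by positivity) (Finset.mem_univ j)
  have hcont : ContinuousOn f (Set.Icc 0 L) := by fun_prop
  obtain ⟨l, ⟨hl_nonneg, -⟩, hl⟩ :=
    intermediate_value_Icc (by linarith) hcont ⟨hf0.symm ▸ zero_le_one, hfL⟩
  have hl0 : l ≠ 0 := by rintro rfl; rw [hf0] at hl; exact zero_ne_one hl
  exact ⟨⟨fun i => (l : ℂ) ^ χ i * v i, hl⟩, l, lt_of_le_of_ne hl_nonneg (Ne.symm hl0),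
    fun _ => rfl⟩

lemma powVec_ne_zero (d : Fin m → ℕ) (z : Sph m) : powVec m d z ≠ 0 := by
  intro h
  have := z.2
  simp_all [powVec, funext_iff]

lemma IsEMap.apply_eq_of_powVec_eq {e : WP m ω → WP m χ} (he : IsEMap m χ ω e)
    (hχ : ∀ i, 0 < χ i) {z z' : Sph m} (t : ℂ) (ht : ‖t‖ = 1)
    (h : ∀ i, powVec m (dExp m χ ω) z' i = t ^ χ i * powVec m (dExp m χ ω) z i) :
    e (wpMk m ω z) = e (wpMk m ω z') := by
  obtain ⟨w, hw⟩ := exists_isNorm hχ (powVec_ne_zero (dExp m χ ω) z)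
  have hw' : IsNorm m χ (powVec m (dExp m χ ω) z') (wSmul χ t ht w) := by
    rw [show powVec m (dExp m χ ω) z' = _ from funext h]
    exact isNorm_wSmul hw t ht
  rw [he.2 z w hw, he.2 z' _ hw']
  exact Quot.sound (wRel_wSmul t ht w)

lemma sVal_eq_two (hdvd : ∀ i, ω i ∣ 2 * χ i) (hndvd : ¬ ∀ i, ω i ∣ χ i) : sVal m χ ω = 2 := by
  refine IsLeast.csInf_eq ⟨⟨two_pos, hdvd⟩, fun s ⟨hs, hs_dvd⟩ => ?_⟩
  by_contra! hs2
  obtain rfl : s = 1 := by omega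
  exact hndvd (by simpa using hs_dvd)

end WeightedProjective

lemma dExp_212 : dExp 3 ![2, 1, 2] ![2, 2, 4] = ![2, 1, 1] := by
  unfold dExp
  rw [sVal_eq_two (by decide) (by decide)]
  decide

lemma dExp_122 : dExp 3 ![1, 2, 2] ![2, 2, 4] = ![1, 2, 1] := by
  unfold dExp
  rw [sVal_eq_two (by decide) (by decide)]
  decide

def invSqrtTwo : ℂ := ((Real.sqrt 2)⁻¹ : ℝ)

lemma invSqrtTwo_ne_zero : invSqrtTwo ≠ 0 := by simp [invSqrtTwo]

lemma norm_invSqrtTwo_sq : ‖invSqrtTwo‖ ^ 2 = 1 / 2 := by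
  simp [invSqrtTwo, inv_pow]

def zPlus : Sph 3 :=
  ⟨![invSqrtTwo, invSqrtTwo, 0], by simp [Fin.sum_univ_three, norm_invSqrtTwo_sq]; norm_num⟩

def zMinus : Sph 3 :=
  ⟨![-invSqrtTwo, invSqrtTwo, 0], by simp [Fin.sum_univ_three, norm_invSqrtTwo_sq]; norm_num⟩

lemma not_wRel_zPlus_zMinus : ¬ wRel 3 ![2, 2, 4] zPlus zMinus := by
  rintro ⟨t, -, h⟩
  have h0 : -invSqrtTwo = t ^ 2 * invSqrtTwo := h 0
  have h1 : invSqrtTwo = t ^ 2 * invSqrtTwo := h 1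
  exact invSqrtTwo_ne_zero (by linear_combination (h1 - h0) / 2)

theorem statement12_general
    (e1 : WP 3 ![2, 2, 4] → WP 3 ![2, 1, 2])
    (h1 : IsEMap 3 ![2, 1, 2] ![2, 2, 4] e1)
    (e2 : WP 3 ![2, 2, 4] → WP 3 ![1, 2, 2])
    (h2 : IsEMap 3 ![1, 2, 2] ![2, 2, 4] e2) :
    ¬ Function.Injective (fun w : WP 3 ![2, 2, 4] => (e1 w, e2 w)) := by
  intro hinj
  refine not_wRel_zPlus_zMinus (wRel_of_wpMk_eq (hinj (Prod.ext ?_ ?_)))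
  · refine h1.apply_eq_of_powVec_eq (by decide) 1 norm_one fun i => ?_
    fin_cases i <;> simp [powVec, dExp_212, zPlus, zMinus]
  · refine h2.apply_eq_of_powVec_eq (by decide) (-1) (by simp) fun i => ?_
    fin_cases i <;> simp [powVec, dExp_122, zPlus, zMinus]

/-- For `σ = (1,2,2)` and `σ' = (2,1,2)` (which are not coprime), with
`σσ' = (2,2,4)`, the canonical map from `P(2,2,4)` to the pullback
`{(z', z) ∈ P(2,1,2) × P(1,2,2) : e(1/σ')(z') = e(1/σ)(z)}`, i.e. the map
`w ↦ (e(σ'/σσ')(w), e(σ/σσ')(w))`, is not injective: the coprimality hypothesis in the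
pullback statement cannot be omitted. -/
theorem statement12
    (e1 : WP 3 ![2, 2, 4] → WP 3 ![2, 1, 2])
    (h1 : IsEMap 3 ![2, 1, 2] ![2, 2, 4] e1)
    (e2 : WP 3 ![2, 2, 4] → WP 3 ![1, 2, 2])
    (h2 : IsEMap 3 ![1, 2, 2] ![2, 2, 4] e2)
    (q' : WP 3 ![2, 1, 2] → WP 3 (fun _ => 1))
    (hq' : IsEMap 3 (fun _ => 1) ![2, 1, 2] q')
    (q : WP 3 ![1, 2, 2] → WP 3 (fun _ => 1))
    (hq : IsEMap 3 (fun _ => 1) ![1, 2, 2] q) :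
    ¬ Function.Injective (fun w : WP 3 ![2, 2, 4] => (e1 w, e2 w)) :=
  statement12_general e1 h1 e2 h2
end
end

section
/- Let χ be a weight vector and l = lcm(χ_0, …, χ_n). The formula t·[z] = [t ·_χ z] defines a continuous action of the circle T on the weighted lens space L(l;χ). Moreover: (i) this action descends to a free action of the quotient group T/μ_l, i.e. if t·[z] = [z] in L(l;χ) for some z ∈ S^{2n+1} and t ∈ T, then t^l = 1; and (ii) the orbit space of this T-action on L(l;χ), with the quotient topology, is homeomorphic to P(χ) via the map sending the class of z in L(l;χ) to [z]_χ. -/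
noncomputable section

/-- The relation on the sphere whose quotient is the weighted lens space `L(k;χ)`. -/
def lensRel (m k : ℕ) (χ : Fin m → ℕ) (z w : Sph m) : Prop :=
  ∃ ζ : ℂ, ζ ^ k = 1 ∧ ∀ i, (w : Fin m → ℂ) i = ζ ^ χ i * (z : Fin m → ℂ) i

/-- The weighted lens space `L(k;χ)`, with the quotient topology. -/
abbrev Lens (m k : ℕ) (χ : Fin m → ℕ) : Type := Quot (lensRel m k χ)

/-!
The circle acts on the sphere by homeomorphisms `z ↦ t ·_χ z` commuting with the action of
`μ_l`, so it descends to `L(l;χ)`; continuity of the action on `T × L(l;χ)` holds because the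
quotient map of a finite group acting by homeomorphisms is open, and a product of open quotient
maps is a quotient map. If `t ·_χ z = ζ ·_χ z` with `ζ ^ l = 1`, a nonzero coordinate `z_j` gives
`(t ζ⁻¹) ^ χ_j = 1`, and `χ_j ∣ l` yields `t ^ l = 1`. Finally, `P(χ)` and the orbit space of
`L(l;χ)` are both quotients of the sphere by the relation `w = t ·_χ z`, taken in one or in two
steps, so the identity of the sphere induces the homeomorphism.
-/

def quotQuotHomeomorph {X : Type*} [TopologicalSpace X] {r p : X → X → Prop}
    {s : Quot r → Quot r → Prop} (hr : ∀ x y, r x y → Quot.mk p x = Quot.mk p y)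
    (hs : ∀ a b, s a b → Quot.lift (Quot.mk p) hr a = Quot.lift (Quot.mk p) hr b)
    (hp : ∀ x y, p x y → Quot.mk s (Quot.mk r x) = Quot.mk s (Quot.mk r y)) :
    Quot s ≃ₜ Quot p where
  toFun := Quot.lift (Quot.lift (Quot.mk p) hr) hs
  invFun := Quot.lift (fun x => Quot.mk s (Quot.mk r x)) hp
  left_inv := Quot.ind <| Quot.ind fun _ => rfl
  right_inv := Quot.ind fun _ => rfl
  continuous_toFun := continuous_quot_lift _ (continuous_quot_lift _ continuous_quot_mk)
  continuous_invFun := continuous_quot_lift _ (continuous_quot_mk.comp continuous_quot_mk)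

namespace Sph

variable {m : ℕ}

@[ext]
lemma ext {z w : Sph m} (h : ∀ i, (z : Fin m → ℂ) i = (w : Fin m → ℂ) i) : z = w :=
  Subtype.ext (funext h)

lemma exists_ne_zero (z : Sph m) : ∃ i, (z : Fin m → ℂ) i ≠ 0 := by
  by_contra! h
  simpa [h] using z.2

variable (χ : Fin m → ℕ)

def smul (t : {t : ℂ // ‖t‖ = 1}) (z : Sph m) : Sph m :=
  ⟨fun i => (t : ℂ) ^ χ i * (z : Fin m → ℂ) i, by simpa [t.2] using z.2⟩

@[simp]
lemma coe_smul (t : {t : ℂ // ‖t‖ = 1}) (z : Sph m) (i : Fin m) :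
    (smul χ t z : Fin m → ℂ) i = (t : ℂ) ^ χ i * (z : Fin m → ℂ) i :=
  rfl

lemma continuous_smul : Continuous fun p : {t : ℂ // ‖t‖ = 1} × Sph m => smul χ p.1 p.2 :=
  .subtype_mk (continuous_pi fun i =>
    ((continuous_subtype_val.comp continuous_fst).pow _).mul
      ((continuous_apply i).comp (continuous_subtype_val.comp continuous_snd))) _

lemma smul_smul {t s u : {t : ℂ // ‖t‖ = 1}} (h : (u : ℂ) = t * s) (z : Sph m) :
    smul χ t (smul χ s z) = smul χ u z := by
  ext i
  simp [h, mul_pow, mul_assoc]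

lemma smul_of_coe_eq_one {t : {t : ℂ // ‖t‖ = 1}} (h : (t : ℂ) = 1) (z : Sph m) :
    smul χ t z = z := by
  ext i
  simp [h]

def smulHomeomorph (t : {t : ℂ // ‖t‖ = 1}) : Sph m ≃ₜ Sph m where
  toFun := smul χ t
  invFun := smul χ ⟨(t : ℂ)⁻¹, by simp [t.2]⟩
  left_inv z := by
    have ht : (t : ℂ) ≠ 0 := ne_zero_of_norm_ne_zero (by simp [t.2])
    rw [smul_smul χ (u := ⟨1, norm_one⟩) (inv_mul_cancel₀ ht).symm, smul_of_coe_eq_one χ rfl]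
  right_inv z := by
    have ht : (t : ℂ) ≠ 0 := ne_zero_of_norm_ne_zero (by simp [t.2])
    rw [smul_smul χ (u := ⟨1, norm_one⟩) (mul_inv_cancel₀ ht).symm, smul_of_coe_eq_one χ rfl]
  continuous_toFun := (continuous_smul χ).comp (.prodMk continuous_const continuous_id)
  continuous_invFun := (continuous_smul χ).comp (.prodMk continuous_const continuous_id)

end Sph

section

variable {m l : ℕ} {χ : Fin m → ℕ}

lemma lensRel_equivalence (hl : l ≠ 0) : Equivalence (lensRel m l χ) where
  refl _ := ⟨1, one_pow l, fun i => by simp⟩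
  symm := by
    rintro z w ⟨ζ, hζ, hc⟩
    have hζ0 : ζ ≠ 0 := by rintro rfl; simp [zero_pow hl] at hζ
    exact ⟨ζ⁻¹, by rw [inv_pow, hζ, inv_one], fun i => by simp [hc i, hζ0]⟩
  trans := by
    rintro z w v ⟨ζ, hζ, hc⟩ ⟨η, hη, hc'⟩
    refine ⟨η * ζ, by rw [mul_pow, hζ, hη, one_mul], fun i => ?_⟩
    rw [hc' i, hc i, mul_pow, mul_assoc]

lemma lensRel_smul (t : {t : ℂ // ‖t‖ = 1}) {z w : Sph m} (h : lensRel m l χ z w) :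
    lensRel m l χ (Sph.smul χ t z) (Sph.smul χ t w) := by
  obtain ⟨ζ, hζ, hc⟩ := h
  exact ⟨ζ, hζ, fun i => by simp only [Sph.coe_smul, hc i]; ring⟩

namespace Lens

def smul (t : {t : ℂ // ‖t‖ = 1}) : Lens m l χ → Lens m l χ :=
  Quot.map (Sph.smul χ t) fun _ _ => lensRel_smul t

lemma smul_of_coe_eq_one {t : {t : ℂ // ‖t‖ = 1}} (h : (t : ℂ) = 1) (x : Lens m l χ) :
    smul t x = x := by
  induction x using Quot.ind
  exact congrArg _ (Sph.smul_of_coe_eq_one χ h _)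

lemma smul_smul {t s u : {t : ℂ // ‖t‖ = 1}} (h : (u : ℂ) = t * s) (x : Lens m l χ) :
    smul u x = smul t (smul s x) := by
  induction x using Quot.ind
  exact congrArg _ (Sph.smul_smul χ h _).symm

lemma isOpenQuotientMap_mk (hl : l ≠ 0) : IsOpenQuotientMap (Quot.mk (lensRel m l χ)) := by
  refine ⟨Quot.exists_rep, continuous_quot_mk, fun U hU => ?_⟩
  rw [← isQuotientMap_quot_mk.isOpen_preimage]
  -- the saturation of `U` is the union of its translates by the `l`-th roots of unity
  have hsat : Quot.mk (lensRel m l χ) ⁻¹' (Quot.mk _ '' U) = ⋃ ζ : {ζ : ℂ // ζ ^ l = 1},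
      Sph.smulHomeomorph χ ⟨ζ, Complex.norm_eq_one_of_pow_eq_one ζ.2 hl⟩ '' U := by
    ext z
    simp only [Set.mem_preimage, Set.mem_image, Set.mem_iUnion]
    constructor
    · rintro ⟨w, hwU, hw⟩
      obtain ⟨ζ, hζ, hc⟩ := (lensRel_equivalence hl).eqvGen_iff.mp (Quot.eq.mp hw)
      exact ⟨⟨ζ, hζ⟩, w, hwU, Sph.ext fun i => (hc i).symm⟩
    · rintro ⟨ζ, w, hwU, rfl⟩
      exact ⟨w, hwU, Quot.sound ⟨ζ, ζ.2, fun i => rfl⟩⟩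
  rw [hsat]
  exact isOpen_iUnion fun ζ => (Sph.smulHomeomorph χ _).isOpenMap U hU

lemma continuous_smul (hl : l ≠ 0) :
    Continuous fun p : {t : ℂ // ‖t‖ = 1} × Lens m l χ => smul p.1 p.2 :=
  (IsOpenQuotientMap.id.prodMap (isOpenQuotientMap_mk hl)).continuous_comp_iff.mp
    (continuous_quot_mk.comp (Sph.continuous_smul χ))

lemma pow_eq_one_of_lensRel_smul_self (hdvd : ∀ i, χ i ∣ l) {t : {t : ℂ // ‖t‖ = 1}}
    {z : Sph m} (h : lensRel m l χ (Sph.smul χ t z) z) : (t : ℂ) ^ l = 1 := by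
  obtain ⟨ζ, hζ, hc⟩ := h
  obtain ⟨j, hj⟩ := z.exists_ne_zero
  have htζ : ((t : ℂ) * ζ) ^ χ j = 1 := by
    refine mul_right_cancel₀ hj ?_
    rw [one_mul, mul_pow]
    conv_rhs => rw [hc j]
    simp only [Sph.coe_smul]
    ring
  obtain ⟨k, hk⟩ := hdvd j
  calc (t : ℂ) ^ l = ((t : ℂ) * ζ) ^ l := by rw [mul_pow, hζ, mul_one]
    _ = 1 := by rw [hk, pow_mul, htζ, one_pow]

end Lens

end

theorem statement14_general (n : ℕ) (χ : Fin (n + 1) → ℕ) (hχ : ∀ i, 1 ≤ χ i) :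
    ∃ a : {t : ℂ // ‖t‖ = 1} →
        Lens (n + 1) (Finset.univ.lcm χ) χ → Lens (n + 1) (Finset.univ.lcm χ) χ,
      Continuous (fun p : {t : ℂ // ‖t‖ = 1} ×
          Lens (n + 1) (Finset.univ.lcm χ) χ => a p.1 p.2) ∧
      (∀ (t : {t : ℂ // ‖t‖ = 1}) (z w : Sph (n + 1)),
        (∀ i, (w : Fin (n + 1) → ℂ) i = (t : ℂ) ^ χ i * (z : Fin (n + 1) → ℂ) i) →
        a t (Quot.mk _ z) = Quot.mk _ w) ∧
      (∀ t : {t : ℂ // ‖t‖ = 1}, (t : ℂ) = 1 → ∀ x, a t x = x) ∧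
      (∀ t t' tt' : {t : ℂ // ‖t‖ = 1}, (tt' : ℂ) = (t : ℂ) * (t' : ℂ) →
        ∀ x, a tt' x = a t (a t' x)) ∧
      (∀ (t : {t : ℂ // ‖t‖ = 1}) (z : Sph (n + 1)),
        a t (Quot.mk _ z) = Quot.mk _ z → (t : ℂ) ^ Finset.univ.lcm χ = 1) ∧
      ∃ G : Quot (fun x y : Lens (n + 1) (Finset.univ.lcm χ) χ =>
          ∃ t : {t : ℂ // ‖t‖ = 1}, a t x = y) ≃ₜ WP (n + 1) χ,
        ∀ z : Sph (n + 1),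
          G (Quot.mk _ (Quot.mk (lensRel (n + 1) (Finset.univ.lcm χ) χ) z)) =
            wpMk (n + 1) χ z := by
  set l := Finset.univ.lcm χ
  have hdvd : ∀ i, χ i ∣ l := fun i => Finset.dvd_lcm (Finset.mem_univ i)
  have hl : l ≠ 0 := fun h => by
    obtain ⟨i, -, hi⟩ := Finset.lcm_eq_zero_iff.mp h
    exact Nat.one_le_iff_ne_zero.mp (hχ i) hi
  refine ⟨Lens.smul, Lens.continuous_smul hl, fun t z w h => ?_, fun _ => Lens.smul_of_coe_eq_one,
    fun _ _ _ => Lens.smul_smul, fun t z h => ?_, quotQuotHomeomorph ?_ ?_ ?_, fun _ => rfl⟩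
  · exact congrArg _ (Sph.ext fun i => (h i).symm)
  · exact Lens.pow_eq_one_of_lensRel_smul_self hdvd
      ((lensRel_equivalence hl).eqvGen_iff.mp (Quot.eq.mp h))
  · rintro z w ⟨ζ, hζ, hc⟩
    exact Quot.sound ⟨ζ, Complex.norm_eq_one_of_pow_eq_one hζ hl, hc⟩
  · rintro ⟨z⟩ _ ⟨t, rfl⟩
    exact Quot.sound ⟨t, t.2, fun i => rfl⟩
  · rintro z w ⟨t, ht, hc⟩
    exact Quot.sound ⟨⟨t, ht⟩, congrArg _ (Sph.ext fun i => (hc i).symm)⟩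

/-- With `l = lcm(χ)`, the formula `t·[z] = [t ·_χ z]` defines a continuous
action of the circle `T` on `L(l;χ)`; if `t·[z] = [z]` then `t^l = 1` (so the action descends
to a free action of `T/μ_l`); and the orbit space of this action is homeomorphic to `P(χ)`
via the map sending the class of `z` to `[z]_χ`. -/
theorem statement14 (n : ℕ) (hn : 1 ≤ n) (χ : Fin (n + 1) → ℕ) (hχ : ∀ i, 1 ≤ χ i) :
    ∃ a : {t : ℂ // ‖t‖ = 1} →
        Lens (n + 1) (Finset.univ.lcm χ) χ → Lens (n + 1) (Finset.univ.lcm χ) χ,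
      Continuous (fun p : {t : ℂ // ‖t‖ = 1} ×
          Lens (n + 1) (Finset.univ.lcm χ) χ => a p.1 p.2) ∧
      (∀ (t : {t : ℂ // ‖t‖ = 1}) (z w : Sph (n + 1)),
        (∀ i, (w : Fin (n + 1) → ℂ) i = (t : ℂ) ^ χ i * (z : Fin (n + 1) → ℂ) i) →
        a t (Quot.mk _ z) = Quot.mk _ w) ∧
      (∀ t : {t : ℂ // ‖t‖ = 1}, (t : ℂ) = 1 → ∀ x, a t x = x) ∧
      (∀ t t' tt' : {t : ℂ // ‖t‖ = 1}, (tt' : ℂ) = (t : ℂ) * (t' : ℂ) →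
        ∀ x, a tt' x = a t (a t' x)) ∧
      (∀ (t : {t : ℂ // ‖t‖ = 1}) (z : Sph (n + 1)),
        a t (Quot.mk _ z) = Quot.mk _ z → (t : ℂ) ^ Finset.univ.lcm χ = 1) ∧
      ∃ G : Quot (fun x y : Lens (n + 1) (Finset.univ.lcm χ) χ =>
          ∃ t : {t : ℂ // ‖t‖ = 1}, a t x = y) ≃ₜ WP (n + 1) χ,
        ∀ z : Sph (n + 1),
          G (Quot.mk _ (Quot.mk (lensRel (n + 1) (Finset.univ.lcm χ) χ) z)) =
            wpMk (n + 1) χ z :=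
  statement14_general n χ hχ
end
end

section
/- Let χ be a divisive weight vector, i.e. χ_{j-1} divides χ_j for every 1 ≤ j ≤ n. Then for every 0 ≤ j ≤ n, the subspace {[z]_χ ∈ P(χ) : z_j ≠ 0 and z_i = 0 for all i < j} of P(χ) (these conditions are independent of the chosen representative z ∈ S^{2n+1}) is homeomorphic to ℂ^{n-j}. In particular these n+1 pairwise disjoint subspaces cover P(χ), giving a cell decomposition of P(χ) with exactly one cell in each even dimension 0, 2, …, 2n. -/
noncomputable section

/-!
The cell of index `j` consists of the classes whose first nonzero coordinate is `z_j`. Rotating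
by `t ∈ T` with `t ^ χ_j = conj z_j / ‖z_j‖` makes that coordinate real and positive, and
turns `z_{j+1+k}` into `z_{j+1+k} · (conj z_j / ‖z_j‖) ^ (χ_{j+1+k} / χ_j)`; since `χ_j` divides
every later weight, these numbers do not depend on the representative. They form a point `v` of
the open unit ball of `ℂ^{n-j}`, and the rotated representative is recovered from `v` by
`z_j = √(1 - ‖v‖²)`. The coordinate map is continuous on the cell because `T` acts by
homeomorphisms, so the projection `S^{2n+1} → P(χ)` is open and stays a quotient map over any
subspace. Finally the open ball is homeomorphic to `ℂ^{n-j}`.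
-/

open Topology

namespace WeightedProjective

section Quotient

variable {m : ℕ} {χ : Fin m → ℕ}

theorem wRel_equivalence (χ : Fin m → ℕ) : Equivalence (wRel m χ) where
  refl _ := ⟨1, by simp, by simp⟩
  symm := by
    rintro z w ⟨t, ht, h⟩
    have ht0 : t ≠ 0 := norm_ne_zero_iff.mp (by simp [ht])
    refine ⟨t⁻¹, by simp [ht], fun i => ?_⟩
    rw [h i, ← mul_assoc, ← mul_pow, inv_mul_cancel₀ ht0, one_pow, one_mul]
  trans := by
    rintro z w u ⟨t, ht, h⟩ ⟨s, hs, h'⟩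
    exact ⟨s * t, by simp [ht, hs], fun i => by rw [h' i, h i, mul_pow, mul_assoc]⟩

theorem wpMk_eq_wpMk_iff {z w : Sph m} : wpMk m χ z = wpMk m χ w ↔ wRel m χ z w :=
  Quot.eq.trans (wRel_equivalence χ).eqvGen_iff

theorem wpMk_surjective : Function.Surjective (wpMk m χ) :=
  Quot.exists_rep

def circleSMul (χ : Fin m → ℕ) {t : ℂ} (ht : ‖t‖ = 1) (z : Sph m) : Sph m :=
  ⟨fun i => t ^ χ i * (z : Fin m → ℂ) i, by simpa [ht] using z.2⟩

theorem continuous_circleSMul {t : ℂ} (ht : ‖t‖ = 1) : Continuous (circleSMul χ ht) :=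
  Continuous.subtype_mk (continuous_const.mul continuous_subtype_val :
    Continuous fun z : Sph m => (fun i => t ^ χ i) * z.1) _

theorem wRel_iff_exists_circleSMul {z w : Sph m} :
    wRel m χ z w ↔ ∃ (t : ℂ) (ht : ‖t‖ = 1), circleSMul χ ht z = w := by
  refine ⟨fun ⟨t, ht, h⟩ => ⟨t, ht, Subtype.ext (funext fun i => (h i).symm)⟩, ?_⟩
  rintro ⟨t, ht, rfl⟩
  exact ⟨t, ht, fun _ => rfl⟩

theorem isOpenMap_wpMk : IsOpenMap (wpMk m χ) := by
  intro U hU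
  rw [← isQuotientMap_quot_mk.isOpen_preimage]
  have hsat : Quot.mk (wRel m χ) ⁻¹' (wpMk m χ '' U) =
      ⋃ t : {t : ℂ // ‖t‖ = 1}, circleSMul χ t.2 ⁻¹' U := by
    ext z
    simp only [Set.mem_preimage, Set.mem_image, Set.mem_iUnion]
    constructor
    · rintro ⟨u, hu, hzu⟩
      obtain ⟨t, ht, rfl⟩ := wRel_iff_exists_circleSMul.mp (wpMk_eq_wpMk_iff.mp hzu.symm)
      exact ⟨⟨t, ht⟩, hu⟩
    · rintro ⟨t, hu⟩
      exact ⟨_, hu,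
      (wpMk_eq_wpMk_iff.mpr (wRel_iff_exists_circleSMul.mpr ⟨_, t.2, rfl⟩)).symm⟩
  rw [hsat]
  exact isOpen_iUnion fun t => hU.preimage (continuous_circleSMul t.2)

theorem isQuotientMap_restrictPreimage_wpMk (s : Set (WP m χ)) :
    IsQuotientMap ((⟨wpMk m χ, continuous_quot_mk⟩ : C(Sph m, WP m χ)).restrictPreimage s) :=
  (isOpenMap_wpMk.restrictPreimage s).isQuotientMap continuous_quot_mk.restrictPreimage
    (Set.restrictPreimage_surjective _ wpMk_surjective)

def IsLeading (j : Fin m) (z : Fin m → ℂ) : Prop :=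
  z j ≠ 0 ∧ ∀ i, i < j → z i = 0

theorem IsLeading.of_wRel {j : Fin m} {z w : Sph m} (h : wRel m χ z w)
    (hz : IsLeading j z.1) : IsLeading j w.1 := by
  obtain ⟨t, ht, hw⟩ := h
  have ht0 : t ≠ 0 := norm_ne_zero_iff.mp (by simp [ht])
  exact ⟨by rw [hw j]; exact mul_ne_zero (pow_ne_zero _ ht0) hz.1,
    fun i hi => by rw [hw i, hz.2 i hi, mul_zero]⟩

theorem isLeading_iff_of_wpMk_eq {j : Fin m} {z w : Sph m} (h : wpMk m χ z = wpMk m χ w) :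
    IsLeading j z.1 ↔ IsLeading j w.1 :=
  ⟨.of_wRel (wpMk_eq_wpMk_iff.mp h), .of_wRel (wpMk_eq_wpMk_iff.mp h.symm)⟩

theorem IsLeading.unique {j k : Fin m} {z : Fin m → ℂ} (hj : IsLeading j z)
    (hk : IsLeading k z) : j = k :=
  le_antisymm (not_lt.mp fun h => hk.1 (hj.2 k h)) (not_lt.mp fun h => hj.1 (hk.2 j h))

theorem exists_isLeading (z : Sph m) : ∃ j, IsLeading j z.1 := by
  have hne : {i | (z : Fin m → ℂ) i ≠ 0}.Nonempty := by
    by_contra! h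
    have := z.2
    simp_all [Set.eq_empty_iff_forall_notMem]
  obtain ⟨j, hj, hmin⟩ := wellFounded_lt.has_min _ hne
  exact ⟨j, hj, fun i hi => by_contra fun h => hmin i h hi⟩

variable (χ) in
def cell (j : Fin m) : Set (WP m χ) :=
  {x | ∃ z, wpMk m χ z = x ∧ IsLeading j z.1}

theorem wpMk_mem_cell_iff {j : Fin m} {z : Sph m} : wpMk m χ z ∈ cell χ j ↔ IsLeading j z.1 :=
  ⟨fun ⟨_, hw, hj⟩ => (isLeading_iff_of_wpMk_eq hw).mp hj, fun hj => ⟨z, rfl, hj⟩⟩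

theorem existsUnique_mem_cell (x : WP m χ) : ∃! j, x ∈ cell χ j := by
  obtain ⟨z, rfl⟩ := wpMk_surjective x
  obtain ⟨j, hj⟩ := exists_isLeading z
  exact ⟨j, ⟨z, rfl, hj⟩, fun k hk => (wpMk_mem_cell_iff.mp hk).unique hj⟩

end Quotient

theorem dvd_of_le_of_forall_dvd_succ {n : ℕ} {χ : Fin (n + 1) → ℕ}
    (hdiv : ∀ j : Fin n, χ j.castSucc ∣ χ j.succ) {a b : Fin (n + 1)} (hab : a ≤ b) :
    χ a ∣ χ b :=
  have hmono : Monotone fun i => Associates.mk (χ i) :=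
    Fin.monotone_iff_le_succ.mpr fun i => Associates.mk_le_mk_iff_dvd.mpr (hdiv i)
  Associates.mk_le_mk_iff_dvd.mp (hmono hab)

section Cell

open ComplexConjugate

variable {n : ℕ} (χ : Fin (n + 1) → ℕ) (j : Fin (n + 1))

def idxAbove (k : Fin (n - j)) : Fin (n + 1) :=
  ⟨j + 1 + k, by omega⟩

theorem sum_eq_add_sum_idxAbove {M : Type*} [AddCommMonoid M] {F : Fin (n + 1) → M}
    (hF : ∀ i, i < j → F i = 0) :
    ∑ i, F i = F j + ∑ k, F (idxAbove j k) := by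
  rw [← (finCongr (by omega : (j + 1) + (n - j) = n + 1)).sum_comp, Fin.sum_univ_add,
    Fin.sum_univ_castSucc, Finset.sum_eq_zero fun i _ => hF _ (Fin.lt_def.2 (by simp)),
    zero_add]
  rfl

theorem lt_idxAbove (k : Fin (n - j)) : j < idxAbove j k :=
  Fin.lt_def.2 (by simp [idxAbove]; omega)

theorem exists_idxAbove_eq {i : Fin (n + 1)} (hi : j < i) : ∃ k, idxAbove j k = i :=
  ⟨⟨i - j - 1, by omega⟩, Fin.ext (by simp [idxAbove]; omega)⟩

def relExp (k : Fin (n - j)) : ℕ := χ (idxAbove j k) / χ j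

def cellCoord (z : Fin (n + 1) → ℂ) : EuclideanSpace ℂ (Fin (n - j)) :=
  WithLp.toLp 2 fun k => z (idxAbove j k) * (conj (z j) / ‖z j‖) ^ relExp χ j k

def cellPoint (v : EuclideanSpace ℂ (Fin (n - j))) (i : Fin (n + 1)) : ℂ :=
  if h : j < i then v ⟨i - j - 1, by omega⟩
  else if i = j then (√(1 - ‖v‖ ^ 2) : ℂ) else 0

variable {χ j}

theorem cellPoint_idxAbove (v : EuclideanSpace ℂ (Fin (n - j))) (k : Fin (n - j)) :
    cellPoint j v (idxAbove j k) = v k := by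
  rw [cellPoint, dif_pos (lt_idxAbove j k)]
  exact congrArg (fun k => v k) (Fin.ext (by simp [idxAbove]; omega))

theorem cellPoint_self (v : EuclideanSpace ℂ (Fin (n - j))) :
    cellPoint j v j = (√(1 - ‖v‖ ^ 2) : ℂ) := by
  simp [cellPoint]

theorem cellPoint_of_lt (v : EuclideanSpace ℂ (Fin (n - j))) {i : Fin (n + 1)} (hi : i < j) :
    cellPoint j v i = 0 := by
  simp [cellPoint, hi.not_gt, hi.ne]

theorem sum_norm_sq_cellPoint {v : EuclideanSpace ℂ (Fin (n - j))} (hv : ‖v‖ ≤ 1) :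
    ∑ i, ‖cellPoint j v i‖ ^ 2 = 1 := by
  rw [sum_eq_add_sum_idxAbove j fun i hi => by simp [cellPoint_of_lt v hi]]
  simp only [cellPoint_self, cellPoint_idxAbove, Complex.norm_real, Real.norm_eq_abs, sq_abs]
  rw [← EuclideanSpace.norm_sq_eq, Real.sq_sqrt (by nlinarith [norm_nonneg v])]
  ring

theorem isLeading_cellPoint {v : EuclideanSpace ℂ (Fin (n - j))} (hv : ‖v‖ < 1) :
    IsLeading j (cellPoint j v) :=
  ⟨by rw [cellPoint_self]; exact_mod_cast (Real.sqrt_pos.2 (by nlinarith [norm_nonneg v])).ne',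
    fun _ hi => cellPoint_of_lt v hi⟩

theorem cellCoord_cellPoint {v : EuclideanSpace ℂ (Fin (n - j))} (hv : ‖v‖ < 1) :
    cellCoord χ j (cellPoint j v) = v := by
  have hr : 0 < √(1 - ‖v‖ ^ 2) := Real.sqrt_pos.2 (by nlinarith [norm_nonneg v])
  ext k
  simp [cellCoord, cellPoint_idxAbove, cellPoint_self, abs_of_pos hr, hr.ne']

theorem norm_cellCoord_apply {z : Fin (n + 1) → ℂ} (hz : z j ≠ 0) (k : Fin (n - j)) :
    ‖cellCoord χ j z k‖ = ‖z (idxAbove j k)‖ := by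
  simp [cellCoord, hz]

theorem norm_sq_cellCoord {z : Sph (n + 1)} (hz : IsLeading j z.1) :
    ‖cellCoord χ j z.1‖ ^ 2 = 1 - ‖z.1 j‖ ^ 2 := by
  have hsum := z.2
  rw [sum_eq_add_sum_idxAbove j fun i hi => by simp [hz.2 i hi]] at hsum
  simp only [EuclideanSpace.norm_sq_eq, norm_cellCoord_apply hz.1]
  linarith

theorem cellCoord_eq_of_wRel (hdvd : ∀ i, j < i → χ j ∣ χ i) {z w : Sph (n + 1)}
    (h : wRel (n + 1) χ z w) : cellCoord χ j w.1 = cellCoord χ j z.1 := by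
  obtain ⟨t, ht, rfl⟩ := wRel_iff_exists_circleSMul.mp h
  have htt : t * conj t = 1 := by
    rw [Complex.mul_conj, Complex.normSq_eq_norm_sq, ht]; norm_num
  ext k
  have hexp : χ (idxAbove j k) = χ j * relExp χ j k :=
    (Nat.mul_div_cancel' (hdvd _ (lt_idxAbove j k))).symm
  simp only [cellCoord, circleSMul, map_mul, map_pow, norm_mul, norm_pow, ht, one_pow, one_mul,
    hexp, pow_mul]
  have hunit : (t ^ χ j) ^ relExp χ j k * (conj t ^ χ j) ^ relExp χ j k = 1 := by
    rw [← mul_pow, ← mul_pow, htt, one_pow, one_pow]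
  linear_combination (z.1 (idxAbove j k) * (conj (z.1 j) / ‖z.1 j‖) ^ relExp χ j k) * hunit

theorem continuousOn_cellCoord : ContinuousOn (cellCoord χ j) {z | z j ≠ 0} := by
  refine (EuclideanSpace.equiv _ ℂ).symm.continuous.comp_continuousOn
    (continuousOn_pi.2 fun k => ?_)
  refine (continuous_apply _).continuousOn.mul (ContinuousOn.pow (ContinuousOn.div ?_ ?_ ?_) _)
  · exact (Complex.continuous_conj.comp (continuous_apply j)).continuousOn
  · exact (Complex.continuous_ofReal.comp
      (continuous_norm.comp (continuous_apply j))).continuousOn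
  · intro z hz
    exact_mod_cast norm_ne_zero_iff.2 hz

theorem norm_cellCoord_lt_one {z : Sph (n + 1)} (hz : IsLeading j z.1) :
    ‖cellCoord χ j z.1‖ < 1 := by
  have := norm_pos_iff.2 hz.1
  have := norm_sq_cellCoord (χ := χ) hz
  nlinarith [norm_nonneg (cellCoord χ j z.1)]

theorem wRel_cellPoint_cellCoord (hχj : 0 < χ j) (hdvd : ∀ i, j < i → χ j ∣ χ i)
    {z : Sph (n + 1)} (hz : IsLeading j z.1) :
    wRel (n + 1) χ z ⟨_, sum_norm_sq_cellPoint (norm_cellCoord_lt_one (χ := χ) hz).le⟩ := by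
  have hzj : 0 < ‖z.1 j‖ := norm_pos_iff.2 hz.1
  obtain ⟨t, htc⟩ := IsAlgClosed.exists_pow_nat_eq (conj (z.1 j) / ‖z.1 j‖) hχj
  have ht : ‖t‖ = 1 := (pow_eq_one_iff_of_nonneg (norm_nonneg t) hχj.ne').mp <| by
    rw [← norm_pow, htc]; simp [hzj.ne']
  refine ⟨t, ht, fun i => ?_⟩
  rcases lt_trichotomy i j with hi | hi | hi
  · simp [hz.2 i hi, cellPoint_of_lt _ hi]
  · subst hi
    change cellPoint i _ i = _
    rw [cellPoint_self, norm_sq_cellCoord hz, sub_sub_cancel, Real.sqrt_sq (norm_nonneg _),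
      htc, div_mul_eq_mul_div, Complex.conj_mul', eq_div_iff (by exact_mod_cast hzj.ne')]
    ring
  · obtain ⟨k, rfl⟩ := exists_idxAbove_eq j hi
    have hexp : χ (idxAbove j k) = χ j * relExp χ j k :=
      (Nat.mul_div_cancel' (hdvd _ (lt_idxAbove j k))).symm
    change cellPoint j _ _ = _
    rw [cellPoint_idxAbove]
    simp [cellCoord, hexp, pow_mul, htc, mul_comm]

theorem continuous_cellPoint : Continuous (cellPoint j) := by
  refine continuous_pi fun i => ?_
  unfold cellPoint
  split_ifs
  · exact (continuous_apply _).comp (EuclideanSpace.equiv _ ℂ).continuous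
  · exact Complex.continuous_ofReal.comp (by fun_prop)
  · exact continuous_const

variable (χ j) in
def cellCoordOnPreimage :
    C(wpMk (n + 1) χ ⁻¹' cell χ j, Metric.ball (0 : EuclideanSpace ℂ (Fin (n - j))) 1) where
  toFun z := ⟨cellCoord χ j z.1.1,
    mem_ball_zero_iff.2 (norm_cellCoord_lt_one (wpMk_mem_cell_iff.mp z.2))⟩
  continuous_toFun := Continuous.subtype_mk (continuousOn_cellCoord.comp_continuous
    (continuous_subtype_val.comp continuous_subtype_val)
    fun z => (wpMk_mem_cell_iff.mp z.2).1) _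

theorem factorsThrough_cellCoordOnPreimage (hdvd : ∀ i, j < i → χ j ∣ χ i) :
    Function.FactorsThrough (cellCoordOnPreimage χ j)
      ((⟨wpMk (n + 1) χ, continuous_quot_mk⟩ :
        C(Sph (n + 1), WP (n + 1) χ)).restrictPreimage (cell χ j)) :=
  fun _ _ h => Subtype.ext (cellCoord_eq_of_wRel hdvd
    (wpMk_eq_wpMk_iff.mp (congrArg Subtype.val h : wpMk _ _ _ = wpMk _ _ _))).symm

def cellCoordOnCell (hdvd : ∀ i, j < i → χ j ∣ χ i) :
    C(cell χ j, Metric.ball (0 : EuclideanSpace ℂ (Fin (n - j))) 1) :=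
  (isQuotientMap_restrictPreimage_wpMk (cell χ j)).lift (cellCoordOnPreimage χ j)
    (factorsThrough_cellCoordOnPreimage hdvd)

theorem cellCoordOnCell_wpMk (hdvd : ∀ i, j < i → χ j ∣ χ i) {z : Sph (n + 1)}
    (hz : wpMk (n + 1) χ z ∈ cell χ j) :
    (cellCoordOnCell hdvd (⟨_, hz⟩ : cell χ j) : EuclideanSpace ℂ (Fin (n - j))) =
      cellCoord χ j z.1 :=
  congrArg Subtype.val <| DFunLike.congr_fun
    ((isQuotientMap_restrictPreimage_wpMk (cell χ j)).lift_comp (cellCoordOnPreimage χ j)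
      (factorsThrough_cellCoordOnPreimage hdvd))
    (⟨z, hz⟩ : wpMk (n + 1) χ ⁻¹' cell χ j)

variable (χ j) in
def cellHomeomorphBall (hχj : 0 < χ j) (hdvd : ∀ i, j < i → χ j ∣ χ i) :
    cell χ j ≃ₜ Metric.ball (0 : EuclideanSpace ℂ (Fin (n - j))) 1 where
  toFun := cellCoordOnCell hdvd
  invFun v := ⟨wpMk (n + 1) χ ⟨_, sum_norm_sq_cellPoint (mem_ball_zero_iff.1 v.2).le⟩,
    wpMk_mem_cell_iff.mpr (isLeading_cellPoint (mem_ball_zero_iff.1 v.2))⟩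
  left_inv := by
    rintro ⟨_, z, rfl, hz⟩
    refine Subtype.ext (wpMk_eq_wpMk_iff.mpr ((wRel_equivalence χ).symm ?_))
    convert wRel_cellPoint_cellCoord hχj hdvd hz using 4
    exact cellCoordOnCell_wpMk hdvd _
  right_inv v := Subtype.ext ((cellCoordOnCell_wpMk hdvd _).trans
    (cellCoord_cellPoint (mem_ball_zero_iff.1 v.2)))
  continuous_toFun := ContinuousMap.continuous _
  continuous_invFun := Continuous.subtype_mk (continuous_quot_mk.comp
    (Continuous.subtype_mk (continuous_cellPoint.comp continuous_subtype_val) _)) _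

variable (χ j) in
def cellHomeomorph (hχj : 0 < χ j) (hdvd : ∀ i, j < i → χ j ∣ χ i) :
    cell χ j ≃ₜ (Fin (n - j) → ℂ) :=
  (cellHomeomorphBall χ j hχj hdvd).trans <|
    Homeomorph.unitBall.symm.trans (EuclideanSpace.equiv _ ℂ).toHomeomorph

end Cell

end WeightedProjective

theorem statement18_general (n : ℕ) (χ : Fin (n + 1) → ℕ) (hχ : ∀ i, 1 ≤ χ i)
    (hdiv : ∀ j : Fin n, χ j.castSucc ∣ χ j.succ) :
    (∀ (j : Fin (n + 1)) (z w : Sph (n + 1)), wpMk (n + 1) χ z = wpMk (n + 1) χ w →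
      (((z : Fin (n + 1) → ℂ) j ≠ 0 ∧ ∀ i, i < j → (z : Fin (n + 1) → ℂ) i = 0) ↔
        ((w : Fin (n + 1) → ℂ) j ≠ 0 ∧ ∀ i, i < j → (w : Fin (n + 1) → ℂ) i = 0))) ∧
    (∀ j : Fin (n + 1), Nonempty (
      {x : WP (n + 1) χ // ∃ z : Sph (n + 1), wpMk (n + 1) χ z = x ∧
        (z : Fin (n + 1) → ℂ) j ≠ 0 ∧ ∀ i, i < j → (z : Fin (n + 1) → ℂ) i = 0} ≃ₜ
      (Fin (n - (j : ℕ)) → ℂ))) ∧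
    (∀ x : WP (n + 1) χ, ∃! j : Fin (n + 1), ∃ z : Sph (n + 1),
      wpMk (n + 1) χ z = x ∧
        (z : Fin (n + 1) → ℂ) j ≠ 0 ∧ ∀ i, i < j → (z : Fin (n + 1) → ℂ) i = 0) := by
  open WeightedProjective in
  exact ⟨fun _ _ _ h => isLeading_iff_of_wpMk_eq h,
    fun j => ⟨cellHomeomorph χ j (hχ j) fun _ hi =>
      dvd_of_le_of_forall_dvd_succ hdiv hi.le⟩,
    existsUnique_mem_cell⟩

/-- For a divisive weight vector `χ` (each `χ_{j-1}` divides `χ_j`), the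
condition "`z_j ≠ 0` and `z_i = 0` for `i < j`" is independent of the representative
`z ∈ S^{2n+1}`; for every `j` the corresponding subspace of `P(χ)` is homeomorphic to
`ℂ^{n-j}`; and every point of `P(χ)` lies in exactly one of these `n+1` subspaces, giving a
cell decomposition with one cell in each even dimension `0, 2, …, 2n`. -/
theorem statement18 (n : ℕ) (hn : 1 ≤ n) (χ : Fin (n + 1) → ℕ) (hχ : ∀ i, 1 ≤ χ i)
    (hdiv : ∀ j : Fin n, χ j.castSucc ∣ χ j.succ) :
    (∀ (j : Fin (n + 1)) (z w : Sph (n + 1)), wpMk (n + 1) χ z = wpMk (n + 1) χ w →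
      (((z : Fin (n + 1) → ℂ) j ≠ 0 ∧ ∀ i, i < j → (z : Fin (n + 1) → ℂ) i = 0) ↔
        ((w : Fin (n + 1) → ℂ) j ≠ 0 ∧ ∀ i, i < j → (w : Fin (n + 1) → ℂ) i = 0))) ∧
    (∀ j : Fin (n + 1), Nonempty (
      {x : WP (n + 1) χ // ∃ z : Sph (n + 1), wpMk (n + 1) χ z = x ∧
        (z : Fin (n + 1) → ℂ) j ≠ 0 ∧ ∀ i, i < j → (z : Fin (n + 1) → ℂ) i = 0} ≃ₜ
      (Fin (n - (j : ℕ)) → ℂ))) ∧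
    (∀ x : WP (n + 1) χ, ∃! j : Fin (n + 1), ∃ z : Sph (n + 1),
      wpMk (n + 1) χ z = x ∧
        (z : Fin (n + 1) → ℂ) j ≠ 0 ∧ ∀ i, i < j → (z : Fin (n + 1) → ℂ) i = 0) :=
  statement18_general n χ hχ hdiv
end
end
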